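/- For m = (1+ε)n with ε > 0 (m ≥ 6n suffices for the stated constant), the expected number of labeled trees with k vertices appearing as subgraphs of the random bipartite multigraph G(S,h_1,h_2) with fully random hash functions is at most 2m²·(e/3)^k when m ≥ 6n; in particular, for k ≥ β log n with β a sufficiently large constant, this expectation is O(n^{-α}) for any fixed α. -/

import Mathlib

/-!
Multigraphs are modeled by a map `ends : E → Sym2 V` assigning to each edge its
pair of endpoints.  Subgraphs are given by subsets `F : Finset E` of edges
(together with their incident vertices; isolated vertices are disregarded).
-/

open Finset

variable {V E : Type*}

-- Vertices incident to at least one edge of `F` (isolated vertices disregarded).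
open Classical in
noncomputable def vertsOf [Fintype V] (ends : E → Sym2 V) (F : Finset E) : Finset V :=
  Finset.univ.filter fun v => ∃ e ∈ F, v ∈ ends e

-- Degree of `v` in the multigraph with edge set `F` (loops count twice).
open Classical in
noncomputable def degIn (ends : E → Sym2 V) (F : Finset E) (v : V) : ℕ :=
  2 * (F.filter fun e => ends e = s(v, v)).card +
    (F.filter fun e => v ∈ ends e ∧ ends e ≠ s(v, v)).card

/-- Adjacency via an edge of `F`. -/
def adjIn (ends : E → Sym2 V) (F : Finset E) (v w : V) : Prop :=
  ∃ e ∈ F, ends e = s(v, w)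

/-- The multigraph with edge set `F` is connected (on its non-isolated vertices). -/
def connIn [Fintype V] (ends : E → Sym2 V) (F : Finset E) : Prop :=
  ∀ v ∈ vertsOf ends F, ∀ w ∈ vertsOf ends F, Relation.ReflTransGen (adjIn ends F) v w

/-- The multigraph with edge set `F` is a forest (acyclic): every nonempty edge
subset has a vertex of degree at most one. -/
def isForest [Fintype V] (ends : E → Sym2 V) (F : Finset E) : Prop :=
  ∀ C ⊆ F, C.Nonempty → ∃ v ∈ vertsOf ends C, degIn ends C v ≤ 1

/-- The bipartite multigraph on `[m] ⊔ [m]` whose edge for key `x ∈ T` joins the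
left copy of `a(x).1` to the right copy of `a(x).2`. -/
def bipEnds {n m : ℕ} (T : Finset (Fin n)) (a : {x // x ∈ T} → Fin m × Fin m) :
    {x // x ∈ T} → Sym2 (Fin m ⊕ Fin m) :=
  fun x => s(Sum.inl (a x).1, Sum.inr (a x).2)

/-- The labeled subgraph given by `(T, a)` is a tree with `k` vertices. -/
def isTreeSub {n m : ℕ} (k : ℕ) (T : Finset (Fin n))
    (a : {x // x ∈ T} → Fin m × Fin m) : Prop :=
  connIn (bipEnds T a) Finset.univ ∧ isForest (bipEnds T a) Finset.univ ∧
    (vertsOf (bipEnds T a) Finset.univ).card = k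

-- Expected number of labeled trees with `k` vertices appearing as subgraphs of
-- `G(S,h₁,h₂)` with all `2n` hash values independent and uniform on `[m]`.
open Classical in
noncomputable def expTrees (n m k : ℕ) : ℝ :=
  ∑ T : Finset (Fin n), ∑ a : {x // x ∈ T} → Fin m × Fin m,
    if isTreeSub k T a then (1 / (m : ℝ)) ^ (2 * T.card) else 0

/-!
Removing leaves one at a time shows that a forest has an injective choice of one endpoint per
edge that misses some vertex, while a connected multigraph has at most one vertex more than
edges (reduce to a simple graph on its vertex set). So a tree is a root plus, for each edge, the
endpoint it points to away from the root and the edge (or root) sitting at its other endpoint.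
For the cuckoo graph this gives at most `(2m)^k k^(k-1)` trees on a fixed set of `k - 1` keys,
each present with probability `m^(-2(k-1))`; then `C(n, k-1) k^(k-1) ≤ n^(k-1) e^k` and
`6n ≤ m` leave `36 n (e/3)^k`.
-/

section Degree

variable {ends : E → Sym2 V} {F : Finset E} {v : V}

lemma two_le_degIn_of_loop {e : E} (he : e ∈ F) (hloop : ends e = s(v, v)) :
    2 ≤ degIn ends F v := by
  classical
  have : 0 < (F.filter fun e ↦ ends e = s(v, v)).card :=
    card_pos.2 ⟨e, mem_filter.2 ⟨he, hloop⟩⟩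
  unfold degIn
  omega

open Classical in
lemma card_incident_le_degIn :
    (F.filter fun e ↦ v ∈ ends e).card ≤ degIn ends F v := by
  have hsplit : (F.filter fun e ↦ v ∈ ends e) ⊆ (F.filter fun e ↦ ends e = s(v, v)) ∪
      F.filter fun e ↦ v ∈ ends e ∧ ends e ≠ s(v, v) := by
    intro e
    simp only [mem_filter, mem_union]
    grind
  unfold degIn
  grind [card_le_card hsplit, card_union_le]

end Degree

section Multigraph

variable [Fintype V] {ends : E → Sym2 V} {F G : Finset E}

lemma mem_vertsOf {v : V} : v ∈ vertsOf ends F ↔ ∃ e ∈ F, v ∈ ends e := by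
  simp [vertsOf]

lemma vertsOf_mono (h : F ⊆ G) : vertsOf ends F ⊆ vertsOf ends G := fun _ hv ↦
  let ⟨e, he, hve⟩ := mem_vertsOf.1 hv
  mem_vertsOf.2 ⟨e, h he, hve⟩

lemma vertsOf_eq_empty_iff : vertsOf ends F = ∅ ↔ F = ∅ := by
  refine ⟨fun h ↦ eq_empty_of_forall_notMem fun e he ↦ ?_, fun h ↦ by simp [h, vertsOf]⟩
  exact notMem_empty _ (h ▸ mem_vertsOf.2 ⟨e, he, Sym2.out_fst_mem (ends e)⟩)

lemma image_subset_vertsOf [DecidableEq V] {child : E → V} (h : ∀ x ∈ F, child x ∈ ends x) :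
    F.image child ⊆ vertsOf ends F := by
  simp only [subset_iff, mem_image]
  rintro _ ⟨x, hx, rfl⟩
  exact mem_vertsOf.2 ⟨x, hx, h x hx⟩

lemma isForest.subset (hF : isForest ends F) (hGF : G ⊆ F) : isForest ends G :=
  fun C hC ↦ hF C (hC.trans hGF)

lemma isForest.exists_leaf (hF : isForest ends F) (hne : F.Nonempty) :
    ∃ x ∈ F, ∃ v u, v ≠ u ∧ ends x = s(v, u) ∧ ∀ y ∈ F, v ∈ ends y → y = x := by
  classical
  obtain ⟨v, hv, hdeg⟩ := hF F subset_rfl hne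
  obtain ⟨x, hx, hvx⟩ := mem_vertsOf.1 hv
  have hxv : ends x = s(v, Sym2.Mem.other hvx) := (Sym2.other_spec hvx).symm
  refine ⟨x, hx, v, _, fun h ↦ ?_, hxv, fun y hy hvy ↦ ?_⟩
  · have := two_le_degIn_of_loop hx (hxv.trans (by rw [← h]))
    omega
  · have hincident := (card_incident_le_degIn (ends := ends) (F := F) (v := v)).trans hdeg
    exact card_le_one.1 hincident y (mem_filter.2 ⟨hy, hvy⟩) x (mem_filter.2 ⟨hx, hvx⟩)

theorem isForest.exists_injOn_endpoint [DecidableEq V] (hF : isForest ends F) :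
    ∃ child : E → V, (∀ x ∈ F, child x ∈ ends x) ∧ Set.InjOn child F ∧
      (F.Nonempty → ∃ r ∈ vertsOf ends F, r ∉ F.image child) := by
  classical
  induction F using Finset.strongInduction with
  | H F ih =>
  rcases F.eq_empty_or_nonempty with rfl | hne
  · exact ⟨fun x ↦ (ends x).out.1, by simp, by simp, by simp⟩
  obtain ⟨x, hx, v, u, hvu, hxvu, hleaf⟩ := hF.exists_leaf hne
  obtain ⟨child, hchild, hinj, hroot⟩ :=
    ih (F.erase x) (erase_ssubset hx) (hF.subset (erase_subset x F))
  have hv : v ∉ vertsOf ends (F.erase x) := fun hv ↦ by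
    obtain ⟨y, hy, hvy⟩ := mem_vertsOf.1 hv
    exact (mem_erase.1 hy).1 (hleaf y (mem_of_mem_erase hy) hvy)
  have hv' : v ∉ (F.erase x).image child := fun h ↦ hv (image_subset_vertsOf hchild h)
  have heq : Set.EqOn child (Function.update child x v) (F.erase x) := fun y hy ↦
    (Function.update_of_ne (ne_of_mem_erase hy) _ _).symm
  have himage : F.image (Function.update child x v) = insert v ((F.erase x).image child) := by
    conv_lhs => rw [← insert_erase hx, image_insert, Function.update_self]
    rw [image_congr heq]
  refine ⟨Function.update child x v, fun y hy ↦ ?_, ?_, fun _ ↦ ?_⟩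
  · rcases eq_or_ne y x with rfl | hyx
    · simp [hxvu]
    · rw [Function.update_of_ne hyx]
      exact hchild y (mem_erase.2 ⟨hyx, hy⟩)
  · rw [← insert_erase hx, coe_insert, Set.injOn_insert (notMem_erase x F)]
    refine ⟨hinj.congr heq, ?_⟩
    rw [Function.update_self, ← heq.image_eq]
    simpa [and_comm] using hv'
  · rw [himage]
    rcases (F.erase x).eq_empty_or_nonempty with he | he
    · exact ⟨u, mem_vertsOf.2 ⟨x, hx, by simp [hxvu]⟩, by simp [he, hvu.symm]⟩
    · obtain ⟨r, hr, hrc⟩ := hroot he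
      refine ⟨r, vertsOf_mono (erase_subset x F) hr, ?_⟩
      rw [mem_insert, not_or]
      exact ⟨fun hrv ↦ hv (hrv ▸ hr), hrc⟩

lemma connIn.card_vertsOf_le (hc : connIn ends F) : (vertsOf ends F).card ≤ F.card + 1 := by
  classical
  rcases (vertsOf ends F).eq_empty_or_nonempty with hW | ⟨w, hw⟩
  · simp [hW]
  have : Nonempty (vertsOf ends F) := ⟨⟨w, hw⟩⟩
  let G : SimpleGraph (vertsOf ends F) := SimpleGraph.fromRel fun a b ↦ adjIn ends F a b
  have hreach (a : vertsOf ends F) (b : V) (hab : Relation.ReflTransGen (adjIn ends F) a b)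
      (hb : b ∈ vertsOf ends F) : G.Reachable a ⟨b, hb⟩ := by
    induction hab with
    | refl => rfl
    | @tail c b _ hcb ih =>
      obtain ⟨e, he, hecb⟩ := hcb
      have hc : c ∈ vertsOf ends F := mem_vertsOf.2 ⟨e, he, by simp [hecb]⟩
      refine (ih hc).trans ?_
      rcases eq_or_ne c b with rfl | hne
      · rfl
      · exact SimpleGraph.Adj.reachable <| (SimpleGraph.fromRel_adj _ _ _).2
          ⟨Subtype.coe_ne_coe.1 hne, Or.inl ⟨e, he, hecb⟩⟩
  have hconn : G.Connected := ⟨fun a b ↦ hreach a b (hc a a.2 b b.2) b.2⟩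
  have hmap (e : Sym2 (vertsOf ends F)) (he : e ∈ G.edgeSet) :
      Sym2.map Subtype.val e ∈ F.image ends := by
    induction e using Sym2.ind with
    | h a b =>
      obtain ⟨-, ⟨x, hx, hxab⟩ | ⟨x, hx, hxab⟩⟩ := (SimpleGraph.fromRel_adj _ a b).1 <|
        (SimpleGraph.mem_edgeSet G).1 he
      · exact mem_image.2 ⟨x, hx, by simp [hxab]⟩
      · exact mem_image.2 ⟨x, hx, by simp [hxab, Sym2.eq_swap]⟩
  have hedges : Nat.card G.edgeSet ≤ F.card :=
    calc Nat.card G.edgeSet ≤ Nat.card (F.image ends) :=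
          Nat.card_le_card_of_injective (fun e ↦ ⟨_, hmap e.1 e.2⟩) fun e e' h ↦
            Subtype.ext (Sym2.map.injective Subtype.val_injective (congrArg Subtype.val h))
      _ = (F.image ends).card := Nat.card_eq_finsetCard _
      _ ≤ F.card := card_image_le
  have := hconn.card_vert_le_card_edgeSet_add_one
  rw [Nat.card_eq_finsetCard] at this
  omega

lemma isForest.card_lt_card_vertsOf (hf : isForest ends F) (hne : F.Nonempty) :
    F.card < (vertsOf ends F).card := by
  classical
  obtain ⟨child, hchild, hinj, hroot⟩ := hf.exists_injOn_endpoint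
  rw [← card_image_of_injOn hinj]
  exact card_lt_card <| (ssubset_iff_of_subset (image_subset_vertsOf hchild)).2 (hroot hne)

lemma card_vertsOf_of_connIn_of_isForest (hc : connIn ends F) (hf : isForest ends F)
    (hne : F.Nonempty) : (vertsOf ends F).card = F.card + 1 :=
  le_antisymm hc.card_vertsOf_le (hf.card_lt_card_vertsOf hne)

lemma exists_vertsOf_eq_insert_image [DecidableEq V] (hc : connIn ends F) (hf : isForest ends F)
    (hne : F.Nonempty) : ∃ (r : V) (child : E → V),
      (∀ x ∈ F, child x ∈ ends x) ∧ vertsOf ends F = insert r (F.image child) := by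
  obtain ⟨child, hchild, hinj, -⟩ := hf.exists_injOn_endpoint
  obtain ⟨r, -, hr⟩ := exists_eq_insert_iff.2 ⟨image_subset_vertsOf hchild, by
    rw [card_image_of_injOn hinj, card_vertsOf_of_connIn_of_isForest hc hf hne]⟩
  exact ⟨r, child, hchild, hr.symm⟩

def rootedTree (r : V) (child : E → V) (parent : E → Option E) : E → Sym2 V :=
  fun x ↦ s(child x, (parent x).elim r child)

open Classical in
theorem card_trees_le [DecidableEq V] [Fintype E] [DecidableEq E] [Nonempty E] :
    (univ.filter fun ends : E → Sym2 V ↦ connIn ends univ ∧ isForest ends univ).card ≤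
      Fintype.card V ^ (Fintype.card E + 1) * (Fintype.card E + 1) ^ Fintype.card E := by
  calc _ ≤ (univ.image fun c : V × (E → V) × (E → Option E) ↦
          rootedTree c.1 c.2.1 c.2.2).card := by
        refine card_le_card fun ends hends ↦ ?_
        obtain ⟨hc, hf⟩ := (mem_filter.1 hends).2
        obtain ⟨r, child, hchild, hverts⟩ := exists_vertsOf_eq_insert_image hc hf univ_nonempty
        have hparent (x : E) : ∃ p : Option E, ends x = s(child x, p.elim r child) := by
          have hother : Sym2.Mem.other (hchild x (mem_univ x)) ∈ insert r (univ.image child) :=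
            hverts ▸ mem_vertsOf.2 ⟨x, mem_univ x, Sym2.other_mem _⟩
          rcases mem_insert.1 hother with h | h
          · exact ⟨none, by simp [← h]⟩
          · obtain ⟨y, -, hy⟩ := mem_image.1 h
            exact ⟨some y, by simp [hy]⟩
        choose parent hparent using hparent
        exact mem_image.2 ⟨(r, child, parent), mem_univ _, funext fun x ↦ (hparent x).symm⟩
    _ ≤ _ := card_image_le
    _ = _ := by
      rw [card_univ, Fintype.card_prod, Fintype.card_prod, Fintype.card_fun, Fintype.card_fun,
        Fintype.card_option]
      ring

end Multigraph

section Bipartite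

variable {n m k : ℕ} {T : Finset (Fin n)} {a : {x // x ∈ T} → Fin m × Fin m}

lemma bipEnds_injective (T : Finset (Fin n)) :
    Function.Injective (bipEnds (m := m) T) := fun a a' h ↦ funext fun x ↦ by
  simpa [bipEnds, Sym2.eq_iff, Prod.ext_iff] using congrFun h x

lemma isTreeSub.card_eq (h : isTreeSub k T a) (hT : T.Nonempty) : k = T.card + 1 := by
  have : Nonempty {x // x ∈ T} := hT.coe_sort
  rw [← h.2.2, card_vertsOf_of_connIn_of_isForest h.1 h.2.1 univ_nonempty, card_univ,
    Fintype.card_coe]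

lemma isTreeSub.nonempty (h : isTreeSub k T a) (hk : k ≠ 0) : T.Nonempty := by
  rw [nonempty_iff_ne_empty]
  rintro rfl
  refine hk (h.2.2 ▸ card_eq_zero.2 (vertsOf_eq_empty_iff.2 ?_))
  simp

open Classical in
lemma card_isTreeSub_le (hT : T.Nonempty) :
    (univ.filter fun a : {x // x ∈ T} → Fin m × Fin m ↦ isTreeSub k T a).card ≤
      (2 * m) ^ (T.card + 1) * (T.card + 1) ^ T.card := by
  have : Nonempty {x // x ∈ T} := hT.coe_sort
  calc _ ≤ (univ.filter fun ends : {x // x ∈ T} → Sym2 (Fin m ⊕ Fin m) ↦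
          connIn ends univ ∧ isForest ends univ).card :=
        card_le_card_of_injOn (bipEnds T) (fun a ha ↦
          mem_filter.2 ⟨mem_univ _, (mem_filter.1 ha).2.1, (mem_filter.1 ha).2.2.1⟩)
          (bipEnds_injective T).injOn
    _ ≤ Fintype.card (Fin m ⊕ Fin m) ^ (Fintype.card T + 1) *
          (Fintype.card T + 1) ^ Fintype.card T := card_trees_le
    _ = _ := by simp [two_mul]

end Bipartite

section Expectation

variable {n m : ℕ}

lemma expTrees_zero_le : expTrees n m 0 ≤ 1 := by
  unfold expTrees
  rw [sum_eq_single ∅ (fun T _ hT ↦ sum_eq_zero fun a _ ↦ if_neg fun h ↦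
    absurd (h.card_eq (nonempty_iff_ne_empty.2 hT)) (by omega)) (by simp)]
  calc _ ≤ ∑ _a : {x // x ∈ (∅ : Finset (Fin n))} → Fin m × Fin m, (1 : ℝ) :=
        sum_le_sum fun a _ ↦ by split_ifs <;> simp
    _ = 1 := by simp

lemma expTrees_one : expTrees n m 1 = 0 :=
  sum_eq_zero fun T _ ↦ sum_eq_zero fun a _ ↦ if_neg fun h ↦ by
    have hT := h.nonempty one_ne_zero
    have := h.card_eq hT
    exact hT.ne_empty (card_eq_zero.1 (by omega))

lemma expTrees_le_choose (j : ℕ) :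
    expTrees n m (j + 2) ≤ n.choose (j + 1) * ((2 * m) ^ (j + 2) * (j + 2) ^ (j + 1)) *
      (1 / (m : ℝ)) ^ (2 * (j + 1)) := by
  classical
  set c : ℝ := (2 * m) ^ (j + 2) * (j + 2) ^ (j + 1) * (1 / (m : ℝ)) ^ (2 * (j + 1))
  have hterm (T : Finset (Fin n)) :
      (∑ a : {x // x ∈ T} → Fin m × Fin m,
        if isTreeSub (j + 2) T a then (1 / (m : ℝ)) ^ (2 * T.card) else 0) ≤
      if T.card = j + 1 then c else 0 := by
    rw [← sum_filter, sum_const, nsmul_eq_mul]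
    split_ifs with hT
    · calc _ ≤ (((2 * m) ^ (T.card + 1) * (T.card + 1) ^ T.card : ℕ) : ℝ) *
            (1 / (m : ℝ)) ^ (2 * T.card) := by
            gcongr
            exact card_isTreeSub_le (card_pos.1 (by omega))
        _ = c := by rw [hT]; push_cast; ring
    · rw [filter_false_of_mem fun a _ h ↦ hT <| by
        have := h.card_eq (h.nonempty (by omega))
        omega]
      simp
  calc expTrees n m (j + 2) ≤ ∑ T : Finset (Fin n), if T.card = j + 1 then c else 0 :=
        sum_le_sum fun T _ ↦ hterm T
    _ = n.choose (j + 1) * c := by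
      rw [← sum_filter, sum_const, univ_filter_card_eq, card_powersetCard, card_univ,
        Fintype.card_fin, nsmul_eq_mul]
    _ = _ := by ring

end Expectation

section Estimates

open Real

lemma choose_mul_succ_pow_le (n j : ℕ) :
    (n.choose j : ℝ) * (j + 1) ^ j ≤ n ^ j * exp 1 ^ (j + 1) := by
  have hfact : ((j + 1 : ℝ)) ^ j / j.factorial ≤ exp (j + 1) :=
    pow_div_factorial_le_exp _ (by positivity) j
  calc (n.choose j : ℝ) * (j + 1) ^ j ≤ n ^ j / j.factorial * (j + 1) ^ j := by
        gcongr
        exact Nat.choose_le_pow_div j n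
    _ = n ^ j * ((j + 1) ^ j / j.factorial) := by ring
    _ ≤ n ^ j * exp (j + 1) := by gcongr
    _ = n ^ j * exp 1 ^ (j + 1) := by rw [← exp_nat_mul]; push_cast; ring_nf

lemma choose_mul_pow_le {n m : ℕ} (hm : 0 < m) (hnm : 6 * n ≤ m) (j : ℕ) :
    n.choose (j + 1) * ((2 * m) ^ (j + 2) * (j + 2) ^ (j + 1)) * (1 / (m : ℝ)) ^ (2 * (j + 1)) ≤
      36 * n * (exp 1 / 3) ^ (j + 2) := by
  have hm' : (0 : ℝ) < m := by exact_mod_cast hm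
  have hnm' : (6 * n : ℝ) ≤ m := by exact_mod_cast hnm
  have hratio : 2 * exp 1 * n / m ≤ exp 1 / 3 := by
    rw [div_le_div_iff₀ hm' (by norm_num)]
    nlinarith [exp_pos 1]
  have hchoose :
      (n.choose (j + 1) : ℝ) * (j + 2) ^ (j + 1) ≤ n ^ (j + 1) * exp 1 ^ (j + 2) := by
    have := choose_mul_succ_pow_le n (j + 1)
    push_cast at this
    convert this using 2; ring
  calc _ = (n.choose (j + 1) : ℝ) * (j + 2) ^ (j + 1) * (2 * m) ^ (j + 2) *
          (1 / (m : ℝ)) ^ (2 * (j + 1)) := by ring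
    _ ≤ n ^ (j + 1) * exp 1 ^ (j + 2) * (2 * m) ^ (j + 2) * (1 / (m : ℝ)) ^ (2 * (j + 1)) := by
        gcongr
    _ = 4 * exp 1 ^ 2 * n * (2 * exp 1 * n / m) ^ j * (m * (1 / m)) ^ (j + 2) := by ring
    _ = 4 * exp 1 ^ 2 * n * (2 * exp 1 * n / m) ^ j := by
        rw [mul_one_div_cancel hm'.ne', one_pow, mul_one]
    _ ≤ 4 * exp 1 ^ 2 * n * (exp 1 / 3) ^ j := by gcongr
    _ = 36 * n * (exp 1 / 3) ^ (j + 2) := by ring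

lemma one_lt_log_three : 1 < log 3 := lt_trans (by norm_num) log_three_gt_d9

lemma exp_one_div_three_pow_le_rpow {x β : ℝ} (hx : 0 < x) {k : ℕ}
    (hk : β / (log 3 - 1) * log x ≤ k) : (exp 1 / 3) ^ k ≤ x ^ (-β) := by
  have hlog3 : 0 < log 3 - 1 := sub_pos.2 one_lt_log_three
  have hk' : β * log x ≤ k * (log 3 - 1) := by
    rwa [div_mul_eq_mul_div, div_le_iff₀ hlog3] at hk
  rw [rpow_def_of_pos hx, ← exp_log (by norm_num : (0 : ℝ) < 3), ← exp_sub, ← exp_nat_mul]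
  exact exp_le_exp.2 (by nlinarith)

end Estimates

open Real in
theorem expTrees_le {n m : ℕ} (hm : 0 < m) (hnm : 6 * n ≤ m) :
    ∀ k, expTrees n m k ≤ (1 + 36 * n) * (exp 1 / 3) ^ k
  | 0 => by simpa using expTrees_zero_le.trans (le_add_of_nonneg_right (by positivity))
  | 1 => by rw [expTrees_one]; positivity
  | j + 2 => (expTrees_le_choose j).trans <| (choose_mul_pow_le hm hnm j).trans <| by
      gcongr
      linarith

/-- For `m ≥ 6n` the expected number of `k`-vertex tree
subgraphs of the fully random cuckoo graph is at most `2m²(e/3)^k`; in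
particular for every `α > 0` there are `β, C` such that for `k ≥ β·log n` the
expectation is at most `C·n^{-α}`. -/
theorem expected_trees_le :
    (∀ n m k : ℕ, 1 ≤ m → 6 * n ≤ m →
      expTrees n m k ≤ 2 * (m : ℝ) ^ 2 * (Real.exp 1 / 3) ^ k) ∧
    ∀ α : ℝ, 0 < α → ∃ β C : ℝ, 0 < β ∧ 0 < C ∧
      ∀ n m k : ℕ, 1 ≤ n → 6 * n ≤ m → β * Real.log n ≤ (k : ℝ) →
        expTrees n m k ≤ C * (n : ℝ) ^ (-α) := by
  refine ⟨fun n m k hm hnm ↦ ?_, fun α hα ↦ ⟨(α + 1) / (Real.log 3 - 1), 37,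
    div_pos (by linarith) (sub_pos.2 one_lt_log_three), by norm_num,
    fun n m k hn hnm hk ↦ ?_⟩⟩
  · have hm' : (1 : ℝ) ≤ m := by exact_mod_cast hm
    have hnm' : (6 * n : ℝ) ≤ m := by exact_mod_cast hnm
    calc expTrees n m k ≤ (1 + 36 * n) * (Real.exp 1 / 3) ^ k := expTrees_le hm hnm k
      _ ≤ 2 * (m : ℝ) ^ 2 * (Real.exp 1 / 3) ^ k := by
        have hn2 : (n : ℝ) ≤ n ^ 2 := by exact_mod_cast Nat.le_self_pow two_ne_zero n
        gcongr
        nlinarith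
  · have hn' : (1 : ℝ) ≤ n := by exact_mod_cast hn
    calc expTrees n m k ≤ (1 + 36 * n) * (Real.exp 1 / 3) ^ k := expTrees_le (by omega) hnm k
      _ ≤ 37 * n * (n : ℝ) ^ (-(α + 1)) := by
        gcongr
        · linarith
        · exact exp_one_div_three_pow_le_rpow (by positivity) hk
      _ = 37 * (n : ℝ) ^ (-α) := by
        rw [show -α = 1 + -(α + 1) by ring, Real.rpow_add (by positivity), Real.rpow_one]
        ring
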